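/- Let λ > 0, ε > 0, p ≥ 0, z > 0. The unique minimizer over s ≥ 0 of s ↦ λ·|s − p| + ε·KL(s|z) is s* = min{ z·e^{λ/ε}, max{ z·e^{−λ/ε}, p } }, where KL(s|z) = s log(s/z) − s + z. -/

import Mathlib

/-- Pointwise Kullback-Leibler divergence. -/
noncomputable def klPt (s z : ℝ) : ℝ := s * Real.log (s / z) - s + z

/-! `ε KL(·|z)` is strictly convex, and its first-order expansion at `t > 0` has remainder
`ε KL(s|t) > 0`. Hence `t > 0` is the unique minimizer as soon as `-ε log(t/z)` is a subgradient of
`λ|· - p|` at `t`. The clamp `s*` lies in `[z e^{-λ/ε}, z e^{λ/ε}]`, so `|ε log(s*/z)| ≤ λ`, and it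
sits at the upper (lower) end whenever it is below (above) `p`, which is the sign condition. -/

open Real InformationTheory

lemma klPt_eq_mul_klFun (s : ℝ) {t : ℝ} (ht : t ≠ 0) : klPt s t = t * klFun (s / t) := by
  simp only [klPt, klFun]
  field_simp
  ring

lemma klPt_pos {s t : ℝ} (hs : 0 ≤ s) (ht : 0 < t) (hne : s ≠ t) : 0 < klPt s t := by
  rw [klPt_eq_mul_klFun s ht.ne']
  refine mul_pos ht ((klFun_nonneg (by positivity)).lt_of_ne' ?_)
  rwa [ne_eq, klFun_eq_zero_iff (by positivity), div_eq_one_iff_eq ht.ne']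

lemma klPt_sub_klPt (s : ℝ) {t z : ℝ} (ht : t ≠ 0) (hz : z ≠ 0) :
    klPt s z - klPt t z = log (t / z) * (s - t) + klPt s t := by
  rcases eq_or_ne s 0 with rfl | hs
  · simp only [klPt, zero_div, log_zero]
    ring
  · simp only [klPt, log_div hs hz, log_div ht hz, log_div hs ht]
    ring

lemma mul_sub_le_mul_abs_sub {g c p s t : ℝ} (hg : |g| ≤ c) (ht : g * (t - p) = c * |t - p|) :
    g * (s - t) ≤ c * (|s - p| - |t - p|) := by
  have : g * (s - p) ≤ c * |s - p| :=
    (le_abs_self _).trans ((abs_mul g _).trans_le (mul_le_mul_of_nonneg_right hg (abs_nonneg _)))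
  linarith [show g * (s - t) = g * (s - p) - g * (t - p) by ring]

lemma tv_add_kl_lt_of_subgradient {lam ε p z s t : ℝ} (hε : 0 < ε) (hz : z ≠ 0) (ht : 0 < t)
    (hbound : |ε * log (t / z)| ≤ lam) (hcompl : ε * log (t / z) * (t - p) = -(lam * |t - p|))
    (hs : 0 ≤ s) (hne : s ≠ t) :
    lam * |t - p| + ε * klPt t z < lam * |s - p| + ε * klPt s z := by
  have hsub : -(ε * log (t / z)) * (s - t) ≤ lam * (|s - p| - |t - p|) :=
    mul_sub_le_mul_abs_sub (by rwa [abs_neg]) (by rw [neg_mul, hcompl, neg_neg])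
  have hkl : ε * klPt s z - ε * klPt t z = ε * log (t / z) * (s - t) + ε * klPt s t := by
    rw [← mul_sub, klPt_sub_klPt s ht.ne' hz]; ring
  linarith [mul_pos hε (klPt_pos hs ht hne)]

lemma isMinOn_and_eq_of_forall_lt {α β : Type*} [Preorder β] {f : α → β} {S : Set α} {t : α}
    (h : ∀ s ∈ S, s ≠ t → f t < f s) : IsMinOn f S t ∧ ∀ s ∈ S, f s = f t → s = t := by
  refine ⟨fun s hs => ?_, fun s hs hst => ?_⟩
  · rcases eq_or_ne s t with rfl | hne
    · exact le_rfl
    · exact (h s hs hne).le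
  · by_contra hne
    exact (h s hs hne).ne' hst

lemma min_max_eq_left_of_lt {α : Type*} [LinearOrder α] {a b p : α} (h : min a (max b p) < p) :
    min a (max b p) = a :=
  min_eq_left (not_lt.1 fun hlt => h.not_ge ((min_eq_right hlt.le).symm ▸ le_max_right b p))

lemma min_max_eq_of_lt {α : Type*} [LinearOrder α] {a b p : α} (hba : b ≤ a)
    (h : p < min a (max b p)) : min a (max b p) = b := by
  have hmax : max b p = b := max_eq_left (not_lt.1 fun hbp => by
    rw [max_eq_right hbp.le] at h; exact h.not_ge (min_le_right _ _))
  rw [hmax, min_eq_right hba]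

lemma abs_log_div_le {s z a : ℝ} (hz : 0 < z) (hlo : z * exp (-a) ≤ s) (hhi : s ≤ z * exp a) :
    |log (s / z)| ≤ a := by
  have hs : 0 < s / z := div_pos ((mul_pos hz (exp_pos _)).trans_le hlo) hz
  rw [abs_le, le_log_iff_exp_le hs, log_le_iff_le_exp hs, le_div_iff₀ hz, div_le_iff₀ hz,
    mul_comm _ z, mul_comm _ z]
  exact ⟨hlo, hhi⟩

theorem prox_kl_of_tv_general (lam ε p z : ℝ) (hlam : 0 < lam) (hε : 0 < ε)
    (hz : 0 < z) :
    let sstar := min (z * Real.exp (lam / ε)) (max (z * Real.exp (-lam / ε)) p)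
    sstar ∈ Set.Ici (0 : ℝ) ∧
    IsMinOn (fun s => lam * |s - p| + ε * klPt s z) (Set.Ici 0) sstar ∧
    ∀ s ∈ Set.Ici (0 : ℝ),
      lam * |s - p| + ε * klPt s z = lam * |sstar - p| + ε * klPt sstar z →
      s = sstar := by
  simp only [neg_div]
  set a := lam / ε
  generalize hdef : min (z * exp a) (max (z * exp (-a)) p) = sstar
  have hεa : ε * a = lam := mul_div_cancel₀ lam hε.ne'
  have hba : z * exp (-a) ≤ z * exp a := by gcongr; linarith [div_pos hlam hε]
  have hlo : z * exp (-a) ≤ sstar := hdef ▸ le_min hba (le_max_left _ _)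
  have hpos : 0 < sstar := (by positivity : 0 < z * exp (-a)).trans_le hlo
  have hbound : |ε * log (sstar / z)| ≤ lam := by
    rw [abs_mul, abs_of_pos hε, ← hεa]
    exact mul_le_mul_of_nonneg_left (abs_log_div_le hz hlo (hdef ▸ min_le_left _ _)) hε.le
  have hcompl : ε * log (sstar / z) * (sstar - p) = -(lam * |sstar - p|) := by
    rcases lt_trichotomy sstar p with hlt | heq | hgt
    · have hs : sstar = z * exp a := hdef ▸ min_max_eq_left_of_lt (hdef ▸ hlt)
      rw [abs_of_neg (sub_neg.2 hlt), hs, mul_div_cancel_left₀ _ hz.ne', log_exp, hεa]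
      ring
    · rw [heq, sub_self, abs_zero, mul_zero, mul_zero, neg_zero]
    · have hs : sstar = z * exp (-a) := hdef ▸ min_max_eq_of_lt hba (hdef ▸ hgt)
      rw [abs_of_pos (sub_pos.2 hgt), hs, mul_div_cancel_left₀ _ hz.ne', log_exp, ← hεa]
      ring
  exact ⟨hpos.le, isMinOn_and_eq_of_forall_lt fun s hs hne =>
    tv_add_kl_lt_of_subgradient hε hz.ne' hpos hbound hcompl hs hne⟩

/-- The unique minimizer over `s ≥ 0` of `s ↦ λ·|s − p| + ε·KL(s|z)` is
`min{ z·e^{λ/ε}, max{ z·e^{−λ/ε}, p } }` (KL-prox of the total variation divergence). -/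
theorem prox_kl_of_tv (lam ε p z : ℝ) (hlam : 0 < lam) (hε : 0 < ε)
    (hp : 0 ≤ p) (hz : 0 < z) :
    let sstar := min (z * Real.exp (lam / ε)) (max (z * Real.exp (-lam / ε)) p)
    sstar ∈ Set.Ici (0 : ℝ) ∧
    IsMinOn (fun s => lam * |s - p| + ε * klPt s z) (Set.Ici 0) sstar ∧
    ∀ s ∈ Set.Ici (0 : ℝ),
      lam * |s - p| + ε * klPt s z = lam * |sstar - p| + ε * klPt sstar z →
      s = sstar :=
  prox_kl_of_tv_general lam ε p z hlam hε hz
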